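/- Let n ≥ 1, β > 0, let Q, K ∈ ℝ^{d×d} satisfy ‖QᵀK‖_op ≤ 1, and let θ₁, …, θₙ ∈ S^{d−1} satisfy ⟨θᵢ, θⱼ⟩ ≥ 1 − δ for all i, j, where 0 < δ < 1/(100 n² β²). Let s₁, …, sₙ > 0 be arbitrary, let θ̄ = (1/n)∑_{j=1}^n θⱼ, and let 𝒱 = 1 − ‖θ̄‖². Then the regulated variance dissipation D := (2/n) ∑_{k=1}^n (1/sₖ) ⟨θₖ − θ̄, P_{θₖ} Aₖ(Θ)⟩ satisfies the two-sided bound ( (−2 + 2nδ) / max_k sₖ ) 𝒱 + ( √2/(3√n) / min_k sₖ ) 𝒱 ≥ D ≥ − ( (2 + √2/(3√n)) / min_k sₖ ) 𝒱. -/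

import Mathlib

open Filter Real
open scoped RealInnerProductSpace BigOperators

/-- Attention vector `A_j(Θ)` with parameters `Q, K`, value matrix `V = I_d`, and inverse
temperature `β`. -/
noncomputable def attnQK {d n : ℕ} (β : ℝ)
    (Q K : EuclideanSpace ℝ (Fin d) →L[ℝ] EuclideanSpace ℝ (Fin d))
    (θ : Fin n → EuclideanSpace ℝ (Fin d)) (j : Fin n) : EuclideanSpace ℝ (Fin d) :=
  (∑ l, Real.exp (β * ⟪Q (θ j), K (θ l)⟫))⁻¹ •
    ∑ k, Real.exp (β * ⟪Q (θ j), K (θ k)⟫) • θ k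

/-- Orthogonal projection onto the tangent space of the unit sphere at `θ`. -/
noncomputable def sphereProj {d : ℕ} (θ y : EuclideanSpace ℝ (Fin d)) :
    EuclideanSpace ℝ (Fin d) :=
  y - ⟪y, θ⟫ • θ

/-! With `M_k = ‖P_{θ_k} θ̄‖² = ‖θ̄‖² - ⟪θ̄, θ_k⟫²`, self-adjointness of `P_{θ_k}` and
`P_{θ_k} θ_k = 0` give `⟪θ_k - θ̄, P_{θ_k} A_k⟫ = -M_k - ⟪P_{θ_k} θ̄, A_k - θ̄⟫`. In the cone the
attention logits differ by at most `β√(2δ)`, so the softmax weights are nearly uniform and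
`‖A_k - θ̄‖ ≤ (e^{β√(2δ)} - 1)√𝒱`. Cauchy–Schwarz gives `∑ M_k ≤ n𝒱` and `∑ √M_k ≤ n√𝒱`, while
`⟪θ̄, θ_k⟫ ∈ [1 - δ, ‖θ̄‖]` gives `∑ M_k ≥ n(1 - nδ)𝒱`. It remains to bound each `1/s_k` between
`1/max s` and `1/min s` and to check `2(e^{β√(2δ)} - 1) ≤ √2/(3√n)`. -/

open Finset

section Sums

variable {n : ℕ}

lemma sum_le_mul_sqrt_of_sum_sq_le {f : Fin n → ℝ} {c : ℝ} (h : ∑ i, f i ^ 2 ≤ n * c) :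
    ∑ i, f i ≤ n * √c := by
  have hsq : (∑ i, f i) ^ 2 ≤ n ^ 2 * c := by
    have := sq_sum_le_card_mul_sum_sq (s := univ) (f := f)
    rw [card_univ, Fintype.card_fin] at this
    nlinarith [Nat.cast_nonneg (α := ℝ) n]
  calc ∑ i, f i ≤ |∑ i, f i| := le_abs_self _
    _ ≤ √(n ^ 2 * c) := Real.abs_le_sqrt hsq
    _ = n * √c := by rw [Real.sqrt_mul (by positivity), Real.sqrt_sq n.cast_nonneg]

lemma abs_div_sum_sub_inv_le {z : Fin n → ℝ} (hz : ∀ i, 0 < z i) {E : ℝ}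
    (hE : ∀ i j, z i ≤ E * z j) (i : Fin n) :
    |z i / ∑ j, z j - (n : ℝ)⁻¹| ≤ (E - 1) / n := by
  have hS : 0 < ∑ j, z j := sum_pos (fun j _ => hz j) ⟨i, mem_univ i⟩
  have hn : (0 : ℝ) < n := by exact_mod_cast Fin.pos i
  have hE1 : 1 ≤ E := le_of_mul_le_mul_right (by simpa using hE i i) (hz i)
  have hupper : n * z i ≤ E * ∑ j, z j := by
    simpa [mul_sum] using sum_le_sum fun j (_ : j ∈ univ) => hE i j
  have hlower : ∑ j, z j ≤ n * (E * z i) := by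
    simpa using sum_le_sum fun j (_ : j ∈ univ) => hE j i
  set w := z i / ∑ j, z j
  have hw_upper : n * w ≤ E := by rw [mul_div_assoc', div_le_iff₀ hS]; exact hupper
  have hw_lower : 1 ≤ E * (n * w) := by
    rw [mul_div_assoc', mul_div_assoc', le_div_iff₀ hS]; linarith
  rw [abs_sub_le_iff, le_div_iff₀ hn, le_div_iff₀ hn, sub_mul, sub_mul, inv_mul_cancel₀ hn.ne']
  constructor <;> nlinarith

lemma sum_sq_sub_sq_le {a : Fin n → ℝ} {r : ℝ} (ha : ∑ i, a i = n * r ^ 2) :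
    ∑ i, (r ^ 2 - a i ^ 2) ≤ n * (1 - r ^ 2) := by
  have hcs := sq_sum_le_card_mul_sum_sq (s := univ) (f := a)
  rw [card_univ, Fintype.card_fin, ha] at hcs
  rw [sum_sub_distrib, sum_const, card_univ, Fintype.card_fin, nsmul_eq_mul]
  rcases (Nat.cast_nonneg (α := ℝ) n).eq_or_lt with hn | hn
  · rw [← hn]; simp only [zero_mul, zero_sub, neg_nonpos]; positivity
  · have hr4 : n * r ^ 4 ≤ ∑ i, a i ^ 2 := le_of_mul_le_mul_left (by linarith) hn
    nlinarith [mul_nonneg hn.le (sq_nonneg (1 - r ^ 2))]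

/-- On `[1 - δ, r]` the chord bound `a² ≤ (r + 1 - δ) a - r (1 - δ)` turns the constraint
`∑ a = n r²` into `∑ (r² - a²) ≥ n r (1 - r) (1 + r - δ)`. -/
lemma mul_sub_le_sum_sq_sub_sq {a : Fin n → ℝ} {r δ : ℝ} (hn : 1 ≤ n) (hδ : 0 ≤ δ)
    (hr0 : 0 ≤ r) (hr1 : r ≤ 1) (ha_ge : ∀ i, 1 - δ ≤ a i) (ha_le : ∀ i, a i ≤ r)
    (ha : ∑ i, a i = n * r ^ 2) :
    n * (1 - n * δ) * (1 - r ^ 2) ≤ ∑ i, (r ^ 2 - a i ^ 2) := by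
  have hn' : (1 : ℝ) ≤ n := by exact_mod_cast hn
  have hchord : ∀ i, a i ^ 2 ≤ (r + 1 - δ) * a i - r * (1 - δ) := fun i => by
    nlinarith [mul_nonneg (sub_nonneg.2 (ha_le i)) (sub_nonneg.2 (ha_ge i))]
  have hsq : ∑ i, a i ^ 2 ≤ (r + 1 - δ) * (n * r ^ 2) - n * (r * (1 - δ)) := by
    simpa [← mul_sum, ha] using sum_le_sum fun i (_ : i ∈ univ) => hchord i
  have hr2 : 1 - δ ≤ r ^ 2 := by
    have := sum_le_sum fun i (_ : i ∈ univ) => ha_ge i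
    rw [ha, sum_const, card_univ, Fintype.card_fin, nsmul_eq_mul] at this
    nlinarith
  have h1 : 0 ≤ n * (1 - r) * (r ^ 2 - 1 + δ) :=
    mul_nonneg (mul_nonneg (by positivity) (sub_nonneg.2 hr1)) (by linarith)
  have h2 : 0 ≤ n * (1 - r) * (n - 1) * δ * (1 + r) := by
    have := sub_nonneg.2 hr1; have := sub_nonneg.2 hn'; positivity
  rw [sum_sub_distrib, sum_const, card_univ, Fintype.card_fin, nsmul_eq_mul]
  nlinarith

end Sums

section Mean

variable {E : Type*} [NormedAddCommGroup E] [InnerProductSpace ℝ E] {n : ℕ}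

lemma sum_norm_sub_sq_of_sum_eq {x : Fin n → E} {m : E} (hm : ∑ i, x i = (n : ℝ) • m) :
    ∑ i, ‖x i - m‖ ^ 2 = ∑ i, ‖x i‖ ^ 2 - n * ‖m‖ ^ 2 := by
  have hinner : ∑ i, ⟪x i, m⟫ = n * ‖m‖ ^ 2 := by
    rw [← sum_inner, hm, real_inner_smul_left, real_inner_self_eq_norm_sq]
  simp only [norm_sub_sq_real, sum_add_distrib, sum_sub_distrib, ← mul_sum, hinner, sum_const,
    card_univ, Fintype.card_fin, nsmul_eq_mul]
  ring

lemma norm_sum_smul_sub_le {w : Fin n → ℝ} (hw : ∑ i, w i = 1) {x : Fin n → E} {m : E}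
    (hm : ∑ i, x i = (n : ℝ) • m) :
    ‖∑ i, w i • x i - m‖ ≤ ∑ i, |w i - (n : ℝ)⁻¹| * ‖x i - m‖ := by
  have hn : (n : ℝ) ≠ 0 := by
    rcases n with _ | n
    · simp at hw
    · positivity
  have hcentered : ∑ i, w i • x i - m = ∑ i, (w i - (n : ℝ)⁻¹) • (x i - m) := by
    simp only [sub_smul, smul_sub, sum_sub_distrib, ← sum_smul, hw, ← smul_sum, hm, smul_smul,
      sum_const, card_univ, Fintype.card_fin, inv_mul_cancel₀ hn, one_smul, nsmul_eq_mul,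
      mul_inv_cancel₀ hn]
    abel
  rw [hcentered]
  refine (norm_sum_le _ _).trans_eq ?_
  simp only [norm_smul, Real.norm_eq_abs]

lemma norm_sub_le_sqrt_of_le_inner {x y : E} (hx : ‖x‖ = 1) (hy : ‖y‖ = 1) {δ : ℝ}
    (h : 1 - δ ≤ ⟪x, y⟫) : ‖x - y‖ ≤ √(2 * δ) := by
  rw [← Real.sqrt_sq (norm_nonneg _)]
  exact Real.sqrt_le_sqrt (by rw [norm_sub_sq_real, hx, hy]; linarith)

lemma norm_le_one_of_sum_eq {x : Fin n → E} (hx : ∀ i, ‖x i‖ = 1) {m : E} (hn : 0 < n)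
    (hm : ∑ i, x i = (n : ℝ) • m) : ‖m‖ ≤ 1 := by
  have hn' : (0 : ℝ) < n := by exact_mod_cast hn
  have := norm_sum_le univ x
  simp only [hm, norm_smul, hx, sum_const, card_univ, Fintype.card_fin, nsmul_eq_mul, mul_one,
    Real.norm_natCast] at this
  exact le_of_mul_le_mul_left (by linarith) hn'

lemma le_inner_of_sum_eq {x : Fin n → E} {δ : ℝ} (hx : ∀ i j, 1 - δ ≤ ⟪x i, x j⟫) {m : E}
    (hm : ∑ i, x i = (n : ℝ) • m) (k : Fin n) : 1 - δ ≤ ⟪m, x k⟫ := by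
  have hn : (0 : ℝ) < n := by exact_mod_cast Fin.pos k
  have := sum_le_sum fun i (_ : i ∈ univ) => hx i k
  rw [← sum_inner, hm, real_inner_smul_left, sum_const, card_univ, Fintype.card_fin,
    nsmul_eq_mul] at this
  exact le_of_mul_le_mul_left (by linarith) hn

lemma sum_inner_of_sum_eq {x : Fin n → E} {m : E} (hm : ∑ i, x i = (n : ℝ) • m) :
    ∑ i, ⟪m, x i⟫ = n * ‖m‖ ^ 2 := by
  rw [← inner_sum, hm, real_inner_smul_right, real_inner_self_eq_norm_sq]

lemma sum_norm_sq_sub_inner_sq_le {x : Fin n → E} {m : E} (hm : ∑ i, x i = (n : ℝ) • m) :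
    ∑ i, (‖m‖ ^ 2 - ⟪m, x i⟫ ^ 2) ≤ n * (1 - ‖m‖ ^ 2) :=
  sum_sq_sub_sq_le (sum_inner_of_sum_eq hm)

lemma mul_le_sum_norm_sq_sub_inner_sq {x : Fin n → E} {δ : ℝ} (hn : 1 ≤ n) (hδ : 0 ≤ δ)
    (hx : ∀ i, ‖x i‖ = 1) (hcone : ∀ i j, 1 - δ ≤ ⟪x i, x j⟫) {m : E}
    (hm : ∑ i, x i = (n : ℝ) • m) :
    n * (1 - n * δ) * (1 - ‖m‖ ^ 2) ≤ ∑ i, (‖m‖ ^ 2 - ⟪m, x i⟫ ^ 2) :=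
  mul_sub_le_sum_sq_sub_sq hn hδ (norm_nonneg m) (norm_le_one_of_sum_eq hx hn hm)
    (le_inner_of_sum_eq hcone hm) (fun i => by simpa [hx i] using real_inner_le_norm m (x i))
    (sum_inner_of_sum_eq hm)

end Mean

lemma inner_apply_apply_le_norm_adjoint_comp {F G : Type*} [NormedAddCommGroup F]
    [InnerProductSpace ℝ F] [CompleteSpace F] [NormedAddCommGroup G] [InnerProductSpace ℝ G]
    [CompleteSpace G]
    (Q K : F →L[ℝ] G) (x y : F) :
    ⟪Q x, K y⟫ ≤ ‖(ContinuousLinearMap.adjoint Q).comp K‖ * ‖y‖ * ‖x‖ := by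
  rw [real_inner_comm, ← ContinuousLinearMap.adjoint_inner_left]
  calc ⟪(ContinuousLinearMap.adjoint Q).comp K y, x⟫
      ≤ ‖(ContinuousLinearMap.adjoint Q).comp K y‖ * ‖x‖ := real_inner_le_norm _ _
    _ ≤ _ := by gcongr; exact ContinuousLinearMap.le_opNorm _ _

section Attention

variable {d n : ℕ}

lemma attnQK_eq_sum_smul (β : ℝ) (Q K : EuclideanSpace ℝ (Fin d) →L[ℝ] EuclideanSpace ℝ (Fin d))
    (θ : Fin n → EuclideanSpace ℝ (Fin d)) (j : Fin n) :
    attnQK β Q K θ j = ∑ k, (exp (β * ⟪Q (θ j), K (θ k)⟫) /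
      ∑ l, exp (β * ⟪Q (θ j), K (θ l)⟫)) • θ k := by
  simp only [attnQK, smul_sum, smul_smul, div_eq_inv_mul]

lemma norm_attnQK_sub_le {β δ : ℝ} (hβ : 0 ≤ β)
    {Q K : EuclideanSpace ℝ (Fin d) →L[ℝ] EuclideanSpace ℝ (Fin d)}
    (hQK : ‖(ContinuousLinearMap.adjoint Q).comp K‖ ≤ 1)
    {θ : Fin n → EuclideanSpace ℝ (Fin d)} (hθ : ∀ j, ‖θ j‖ = 1)
    (hcone : ∀ i j, 1 - δ ≤ ⟪θ i, θ j⟫) {m : EuclideanSpace ℝ (Fin d)}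
    (hm : ∑ j, θ j = (n : ℝ) • m) (k : Fin n) :
    ‖attnQK β Q K θ k - m‖ ≤ (exp (β * √(2 * δ)) - 1) * √(1 - ‖m‖ ^ 2) := by
  have hn : (n : ℝ) ≠ 0 := by exact_mod_cast (Fin.pos k).ne'
  set z : Fin n → ℝ := fun l => exp (β * ⟪Q (θ k), K (θ l)⟫)
  have hlogit : ∀ l l', ⟪Q (θ k), K (θ l)⟫ ≤ √(2 * δ) + ⟪Q (θ k), K (θ l')⟫ := fun l l' => by
    have := inner_apply_apply_le_norm_adjoint_comp Q K (θ k) (θ l - θ l')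
    rw [map_sub, inner_sub_right, hθ k, mul_one] at this
    nlinarith [norm_sub_le_sqrt_of_le_inner (hθ l) (hθ l') (hcone l l'), norm_nonneg (θ l - θ l')]
  have hratio : ∀ l l', z l ≤ exp (β * √(2 * δ)) * z l' := fun l l' => by
    rw [← exp_add, exp_le_exp, ← mul_add]
    exact mul_le_mul_of_nonneg_left (hlogit l l') hβ
  have hweights : ∑ l, z l / ∑ l', z l' = 1 := by
    rw [← sum_div, div_self (sum_pos (fun l _ => exp_pos _) ⟨k, mem_univ k⟩).ne']
  have hspread : ∑ l, ‖θ l - m‖ ≤ n * √(1 - ‖m‖ ^ 2) := by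
    refine sum_le_mul_sqrt_of_sum_sq_le (le_of_eq ?_)
    simp [sum_norm_sub_sq_of_sum_eq hm, hθ, mul_sub]
  rw [attnQK_eq_sum_smul]
  calc ‖∑ l, (z l / ∑ l', z l') • θ l - m‖
      ≤ ∑ l, |z l / ∑ l', z l' - (n : ℝ)⁻¹| * ‖θ l - m‖ := norm_sum_smul_sub_le hweights hm
    _ ≤ ∑ l, (exp (β * √(2 * δ)) - 1) / n * ‖θ l - m‖ := by
      gcongr with l
      exact abs_div_sum_sub_inv_le (fun l => exp_pos _) hratio l
    _ ≤ (exp (β * √(2 * δ)) - 1) / n * (n * √(1 - ‖m‖ ^ 2)) := by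
      rw [← mul_sum]
      have : 0 ≤ exp (β * √(2 * δ)) - 1 := sub_nonneg.2 (one_le_exp (by positivity))
      gcongr
    _ = (exp (β * √(2 * δ)) - 1) * √(1 - ‖m‖ ^ 2) := by field_simp

end Attention

section SphereProj

variable {d : ℕ} {t : EuclideanSpace ℝ (Fin d)}

lemma inner_sphereProj_self (t b : EuclideanSpace ℝ (Fin d)) :
    ⟪sphereProj t b, b⟫ = ‖b‖ ^ 2 - ⟪b, t⟫ ^ 2 := by
  rw [sphereProj, inner_sub_left, real_inner_smul_left, real_inner_self_eq_norm_sq,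
    real_inner_comm t b]
  ring

lemma norm_sphereProj_sq (ht : ‖t‖ = 1) (b : EuclideanSpace ℝ (Fin d)) :
    ‖sphereProj t b‖ ^ 2 = ‖b‖ ^ 2 - ⟪b, t⟫ ^ 2 := by
  rw [sphereProj, norm_sub_sq_real, real_inner_smul_right, norm_smul, Real.norm_eq_abs, mul_pow,
    sq_abs, ht]
  ring

lemma inner_sub_sphereProj (ht : ‖t‖ = 1) (b y : EuclideanSpace ℝ (Fin d)) :
    ⟪t - b, sphereProj t y⟫ = -⟪sphereProj t b, y⟫ := by
  have htt : ⟪t, t⟫ = 1 := by rw [real_inner_self_eq_norm_sq, ht, one_pow]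
  simp only [sphereProj, inner_sub_left, inner_sub_right, real_inner_smul_left,
    real_inner_smul_right, htt, real_inner_comm t y]
  ring

lemma abs_inner_sub_sphereProj_add_le (ht : ‖t‖ = 1) (b y : EuclideanSpace ℝ (Fin d)) :
    |⟪t - b, sphereProj t y⟫ + (‖b‖ ^ 2 - ⟪b, t⟫ ^ 2)| ≤ √(‖b‖ ^ 2 - ⟪b, t⟫ ^ 2) * ‖y - b‖ := by
  have hnorm : √(‖b‖ ^ 2 - ⟪b, t⟫ ^ 2) = ‖sphereProj t b‖ := by
    rw [← norm_sphereProj_sq ht, Real.sqrt_sq (norm_nonneg _)]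
  rw [hnorm, inner_sub_sphereProj ht, ← inner_sphereProj_self, neg_add_eq_sub, ← inner_sub_right,
    norm_sub_rev]
  exact abs_real_inner_le_norm _ _

end SphereProj

section Constants

variable {n : ℕ}

lemma mul_sqrt_two_mul_le {β δ : ℝ} (hβ : 0 < β) (hδ : 0 ≤ δ)
    (h : δ < 1 / (100 * n ^ 2 * β ^ 2)) : β * √(2 * δ) ≤ √2 / (10 * n) := by
  rcases n.eq_zero_or_pos with rfl | hn
  · simp at h; linarith
  have hn' : (0 : ℝ) < n := by exact_mod_cast hn
  rw [lt_div_iff₀ (by positivity)] at h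
  rw [le_div_iff₀ (by positivity), mul_comm β, Real.sqrt_mul (by norm_num), mul_assoc, mul_assoc]
  refine mul_le_of_le_one_right (by positivity) ?_
  rw [← Real.sqrt_sq (by positivity : (0 : ℝ) ≤ β * (10 * n)), ← Real.sqrt_mul hδ,
    Real.sqrt_le_one]
  nlinarith

/-- `e^ε - 1 ≤ ε / (1 - ε) ≤ 1.2 ε` for `ε ≤ 0.15`, and `2.4 √2 / (10 n) ≤ √2 / (3 √n)`. -/
lemma two_mul_exp_sub_one_le {ε : ℝ} (hn : 1 ≤ n) (hε0 : 0 ≤ ε) (hε : ε ≤ √2 / (10 * n)) :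
    2 * (exp ε - 1) ≤ √2 / (3 * √n) := by
  have hn' : (1 : ℝ) ≤ n := by exact_mod_cast hn
  have hsqrt2 : √2 ≤ 1.5 := Real.sqrt_le_iff.2 ⟨by norm_num, by norm_num⟩
  have hsqrtn : √n ≤ n := by
    rw [Real.sqrt_le_left (by positivity)]; nlinarith
  have hε' : ε ≤ 0.15 := hε.trans <| by
    rw [div_le_iff₀ (by positivity)]; nlinarith
  have hexp : exp ε - 1 ≤ 1.2 * ε := by
    have := Real.exp_bound_div_one_sub_of_interval hε0 (by linarith)
    rw [le_div_iff₀ (by linarith)] at this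
    nlinarith [exp_pos ε]
  rw [le_div_iff₀ (by positivity)]
  rw [le_div_iff₀ (by positivity)] at hε
  nlinarith [Real.sqrt_nonneg n, mul_le_mul_of_nonneg_left hsqrtn hε0]

end Constants

section Regulation

lemma inv_mul_le_of_abs_add_le {g M e s smin smax : ℝ} (hsmin : 0 < smin) (hs : smin ≤ s)
    (hs' : s ≤ smax) (hM : 0 ≤ M) (h : |g + M| ≤ e) :
    s⁻¹ * g ≤ -(smax⁻¹ * M) + smin⁻¹ * e := by
  have he : 0 ≤ e := (abs_nonneg _).trans h
  have hg : g ≤ -M + e := by linarith [(abs_le.1 h).2]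
  have hs0 : 0 < s := hsmin.trans_le hs
  calc s⁻¹ * g ≤ s⁻¹ * (-M + e) := by gcongr
    _ = -(s⁻¹ * M) + s⁻¹ * e := by ring
    _ ≤ -(smax⁻¹ * M) + smin⁻¹ * e := by gcongr

lemma neg_inv_mul_le_of_abs_add_le {g M e s smin : ℝ} (hsmin : 0 < smin) (hs : smin ≤ s)
    (hM : 0 ≤ M) (h : |g + M| ≤ e) :
    -(smin⁻¹ * (M + e)) ≤ s⁻¹ * g := by
  have he : 0 ≤ e := (abs_nonneg _).trans h
  have hg : -(M + e) ≤ g := by linarith [(abs_le.1 h).1]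
  have hs0 : 0 < s := hsmin.trans_le hs
  calc -(smin⁻¹ * (M + e)) ≤ -(s⁻¹ * (M + e)) := by gcongr
    _ = s⁻¹ * -(M + e) := by ring
    _ ≤ s⁻¹ * g := by gcongr

variable {n : ℕ} {g M s : Fin n → ℝ} {smin smax c V : ℝ}

lemma sum_sqrt_le_mul_sqrt (hM : ∀ k, 0 ≤ M k) (hsum : ∑ k, M k ≤ n * V) : ∑ k, √(M k) ≤ n * √V :=
  sum_le_mul_sqrt_of_sum_sq_le (by simpa [Real.sq_sqrt (hM _)] using hsum)

lemma regulated_sum_le {δ γ : ℝ} (hsmin : 0 < smin) (hs : ∀ k, smin ≤ s k)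
    (hs' : ∀ k, s k ≤ smax) (hM : ∀ k, 0 ≤ M k) (hc : 0 ≤ c) (hV : 0 ≤ V)
    (hterm : ∀ k, |g k + M k| ≤ √(M k) * (c * √V))
    (hsum_le : ∑ k, M k ≤ n * V) (hsum_ge : n * (1 - n * δ) * V ≤ ∑ k, M k)
    (hγ : 2 * c ≤ γ) (hn : 0 < n) :
    2 / n * ∑ k, (s k)⁻¹ * g k ≤ (-2 + 2 * n * δ) / smax * V + γ / smin * V := by
  have hn' : (0 : ℝ) < n := by exact_mod_cast hn
  have hsmax : 0 < smax := hsmin.trans_le ((hs ⟨0, hn⟩).trans (hs' ⟨0, hn⟩))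
  have hterms := sum_le_sum fun k (_ : k ∈ univ) =>
    inv_mul_le_of_abs_add_le hsmin (hs k) (hs' k) (hM k) (hterm k)
  rw [sum_add_distrib, sum_neg_distrib, ← mul_sum, ← mul_sum, ← sum_mul] at hterms
  have herr : (∑ k, √(M k)) * (c * √V) ≤ n * √V * (c * √V) := by
    gcongr; exact sum_sqrt_le_mul_sqrt hM hsum_le
  calc 2 / n * ∑ k, (s k)⁻¹ * g k
      ≤ 2 / n * (-(smax⁻¹ * (n * (1 - n * δ) * V)) + smin⁻¹ * (n * √V * (c * √V))) := by
        gcongr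
        refine hterms.trans (add_le_add (neg_le_neg ?_) ?_) <;> gcongr
    _ = (-2 + 2 * n * δ) / smax * V + 2 * c / smin * V := by
        rw [mul_mul_mul_comm, Real.mul_self_sqrt hV]; field_simp; ring
    _ ≤ (-2 + 2 * n * δ) / smax * V + γ / smin * V := by gcongr

lemma le_regulated_sum {γ : ℝ} (hsmin : 0 < smin) (hs : ∀ k, smin ≤ s k) (hM : ∀ k, 0 ≤ M k)
    (hc : 0 ≤ c) (hV : 0 ≤ V) (hterm : ∀ k, |g k + M k| ≤ √(M k) * (c * √V))
    (hsum_le : ∑ k, M k ≤ n * V) (hγ : 2 * c ≤ γ) (hn : 0 < n) :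
    -((2 + γ) / smin) * V ≤ 2 / n * ∑ k, (s k)⁻¹ * g k := by
  have hn' : (0 : ℝ) < n := by exact_mod_cast hn
  have hterms := sum_le_sum fun k (_ : k ∈ univ) =>
    neg_inv_mul_le_of_abs_add_le hsmin (hs k) (hM k) (hterm k)
  rw [sum_neg_distrib, ← mul_sum, sum_add_distrib, ← sum_mul] at hterms
  have herr : (∑ k, √(M k)) * (c * √V) ≤ n * √V * (c * √V) := by
    gcongr; exact sum_sqrt_le_mul_sqrt hM hsum_le
  calc -((2 + γ) / smin) * V ≤ -((2 + 2 * c) / smin) * V := by gcongr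
    _ = 2 / n * -(smin⁻¹ * (n * V + n * √V * (c * √V))) := by
        rw [mul_mul_mul_comm, Real.mul_self_sqrt hV]; field_simp
    _ ≤ 2 / n * ∑ k, (s k)⁻¹ * g k := by
        gcongr
        refine le_trans ?_ hterms
        gcongr

end Regulation

/-- two-sided bound on the regulated variance dissipation in a local cone.
Here `sSup (Set.range s)` and `sInf (Set.range s)` are `max_k s_k` and `min_k s_k`. -/
theorem variance_dissipation_bounds (d n : ℕ) (hn : 1 ≤ n) (β : ℝ) (hβ : 0 < β)
    (Q K : EuclideanSpace ℝ (Fin d) →L[ℝ] EuclideanSpace ℝ (Fin d))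
    (hQK : ‖(ContinuousLinearMap.adjoint Q).comp K‖ ≤ 1)
    (δ : ℝ) (hδ : 0 < δ) (hδ' : δ < 1 / (100 * n ^ 2 * β ^ 2))
    (θ : Fin n → EuclideanSpace ℝ (Fin d)) (hθ : ∀ j, ‖θ j‖ = 1)
    (hcone : ∀ i j : Fin n, 1 - δ ≤ ⟪θ i, θ j⟫)
    (s : Fin n → ℝ) (hs : ∀ k, 0 < s k)
    (θbar : EuclideanSpace ℝ (Fin d)) (hθbar : θbar = (n : ℝ)⁻¹ • ∑ j, θ j)
    (V : ℝ) (hV : V = 1 - ‖θbar‖ ^ 2)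
    (D : ℝ) (hD : D = (2 / n) * ∑ k, (s k)⁻¹ * ⟪θ k - θbar, sphereProj (θ k) (attnQK β Q K θ k)⟫) :
    ((-2 + 2 * n * δ) / sSup (Set.range s)) * V +
        ((Real.sqrt 2 / (3 * Real.sqrt n)) / sInf (Set.range s)) * V ≥ D ∧
      D ≥ -(((2 : ℝ) + Real.sqrt 2 / (3 * Real.sqrt n)) / sInf (Set.range s)) * V := by
  have : Nonempty (Fin n) := ⟨⟨0, hn⟩⟩
  have hsum : ∑ j, θ j = (n : ℝ) • θbar := by rw [hθbar, smul_inv_smul₀ (by positivity)]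
  have hsmin : 0 < sInf (Set.range s) :=
    ((Set.finite_range s).lt_csInf_iff (Set.range_nonempty s)).2 (Set.forall_mem_range.2 hs)
  have hs_ge : ∀ k, sInf (Set.range s) ≤ s k :=
    fun k => csInf_le (Set.finite_range s).bddBelow ⟨k, rfl⟩
  have hs_le : ∀ k, s k ≤ sSup (Set.range s) :=
    fun k => le_csSup (Set.finite_range s).bddAbove ⟨k, rfl⟩
  have hV0 : 0 ≤ V :=
    hV ▸ sub_nonneg.2 (pow_le_one₀ (norm_nonneg _) (norm_le_one_of_sum_eq hθ hn hsum))
  have hc0 : 0 ≤ exp (β * √(2 * δ)) - 1 := sub_nonneg.2 (one_le_exp (by positivity))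
  have hc : 2 * (exp (β * √(2 * δ)) - 1) ≤ √2 / (3 * √n) :=
    two_mul_exp_sub_one_le hn (by positivity) (mul_sqrt_two_mul_le hβ hδ.le hδ')
  have hM : ∀ k, 0 ≤ ‖θbar‖ ^ 2 - ⟪θbar, θ k⟫ ^ 2 :=
    fun k => norm_sphereProj_sq (hθ k) θbar ▸ sq_nonneg _
  have hterm : ∀ k, |⟪θ k - θbar, sphereProj (θ k) (attnQK β Q K θ k)⟫ +
      (‖θbar‖ ^ 2 - ⟪θbar, θ k⟫ ^ 2)| ≤
      √(‖θbar‖ ^ 2 - ⟪θbar, θ k⟫ ^ 2) * ((exp (β * √(2 * δ)) - 1) * √V) := fun k =>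
    hV ▸ (abs_inner_sub_sphereProj_add_le (hθ k) _ _).trans
      (by gcongr; exact norm_attnQK_sub_le hβ.le hQK hθ hcone hsum k)
  have hsum_le := hV ▸ sum_norm_sq_sub_inner_sq_le hsum
  have hsum_ge := hV ▸ mul_le_sum_norm_sq_sub_inner_sq hn hδ.le hθ hcone hsum
  subst hD
  exact ⟨regulated_sum_le hsmin hs_ge hs_le hM hc0 hV0 hterm hsum_le hsum_ge hc hn,
    le_regulated_sum hsmin hs_ge hM hc0 hV0 hterm hsum_le hc hn⟩
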